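/- Let υ = (υ₁, υ₂, υ₃) : I → ℝ³ be a smooth unit-speed Legendre curve in 𝒬³_α (I an open interval, υ₁ > 0). Then there exists a smooth function ϕ : I → ℝ such that υ₁'(s) = cos ϕ(s)/υ₁(s), υ₂'(s) = sin ϕ(s)/υ₁(s), and υ₃'(s) = 2 sin ϕ(s) for all s ∈ I; moreover (υ₁²)'(s) = 2 cos ϕ(s), so that for any s₀ ∈ I, υ₁(s)² = υ₁(s₀)² + 2∫_{s₀}^{s} cos ϕ(t) dt. -/

import Mathlib

noncomputable section

/-- Points and tangent vectors of ℝ³, written as triples `(x, y, z)`. -/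
abbrev R3 : Type := ℝ × ℝ × ℝ

/-- The underlying open set `{(x,y,z) : x > 0}` of `𝒬³_α`. -/
def U3 : Set R3 := {p : R3 | 0 < p.1}

/-- The contact form `η` on `𝒬³_α` : `η_p(v) = −2x·v₂ + v₃`. -/
def etaQ (p v : R3) : ℝ := -2 * p.1 * v.2.1 + v.2.2

/-- The Reeb vector field `ξ = (0,0,1)`. -/
def xiQ : R3 := (0, 0, 1)

/-- The `(1,1)`-tensor field `φ` : `φ_p(v) = (−v₂, v₁, 2x·v₁)`. -/
def phiQ (p v : R3) : R3 := (-v.2.1, v.1, 2 * p.1 * v.1)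

/-- The pseudo-metric `g_p(u,v) = x²(u₁v₁ + u₂v₂) + ε·η_p(u)·η_p(v)` on `𝒬³_α`. -/
def gQ (ε : ℝ) (p u v : R3) : ℝ :=
  p.1 ^ 2 * (u.1 * v.1 + u.2.1 * v.2.1) + ε * etaQ p u * etaQ p v

/- ----------------- auxiliary lemmas ----------------- -/

/-- On the unit circle every point has an angle. -/
lemma exists_angle {x y : ℝ} (h : x ^ 2 + y ^ 2 = 1) :
    ∃ θ : ℝ, Real.cos θ = x ∧ Real.sin θ = y := by
  have hx1 : -1 ≤ x := by nlinarith [sq_nonneg y]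
  have hx2 : x ≤ 1 := by nlinarith [sq_nonneg y]
  rcases le_or_gt 0 y with hy | hy
  · refine ⟨Real.arccos x, Real.cos_arccos hx1 hx2, ?_⟩
    rw [Real.sin_arccos, show 1 - x ^ 2 = y ^ 2 by linarith]
    exact Real.sqrt_sq hy
  · refine ⟨-Real.arccos x, by rw [Real.cos_neg]; exact Real.cos_arccos hx1 hx2, ?_⟩
    rw [Real.sin_neg, Real.sin_arccos, show 1 - x ^ 2 = y ^ 2 by linarith,
      Real.sqrt_sq_eq_abs, abs_of_neg hy, neg_neg]

/-- A function with vanishing derivative on an order-connected set is constant there. -/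
lemma const_of_hasDerivAt_zero {f : ℝ → ℝ} {S : Set ℝ} (hS : S.OrdConnected)
    {x y : ℝ} (hx : x ∈ S) (hy : y ∈ S)
    (hf : ∀ t ∈ S, HasDerivAt f 0 t) : f x = f y := by
  have h := intervalIntegral.integral_eq_sub_of_hasDerivAt
    (f := f) (f' := fun _ => (0 : ℝ))
    (fun t ht => hf t (hS.uIcc_subset hy hx ht)) intervalIntegrable_const
  simp only [intervalIntegral.integral_zero] at h
  linarith

lemma hasDerivAt_fst3 {f : ℝ → R3} {d : R3} {x : ℝ} (h : HasDerivAt f d x) :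
    HasDerivAt (fun t => (f t).1) d.1 x := by
  exact ((ContinuousLinearMap.fst ℝ ℝ (ℝ × ℝ)).hasFDerivAt.comp_hasDerivAt x h)

/-- Local analyticity of an angle function: if `ϕ' = a b' - b a'`, `a² + b² = 1` on an open
set `I` and `a t₀ ≠ 0`, then `ϕ` is `C^ω` at `t₀` (locally `ϕ = c + arctan (b/a)`). -/
lemma local_analytic {I : Set ℝ} (hIopen : IsOpen I) (a b ϕ : ℝ → ℝ)
    (ha : ContDiff ℝ (⊤ : ℕ∞) a) (hb : ContDiff ℝ (⊤ : ℕ∞) b)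
    (hϕder : ∀ s, HasDerivAt ϕ (a s * deriv b s - b s * deriv a s) s)
    (hab : ∀ s ∈ I, a s ^ 2 + b s ^ 2 = 1)
    {t₀ : ℝ} (ht₀ : t₀ ∈ I) (ha0 : a t₀ ≠ 0) : ContDiffAt ℝ (⊤ : ℕ∞) ϕ t₀ := by
  have haD : ∀ t, HasDerivAt a (deriv a t) t :=
    fun t => (ha.differentiable (by simp) t).hasDerivAt
  have hbD : ∀ t, HasDerivAt b (deriv b t) t :=
    fun t => (hb.differentiable (by simp) t).hasDerivAt
  set V : Set ℝ := I ∩ {s | a s ≠ 0} with hV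
  have hVopen : IsOpen V :=
    hIopen.inter (isOpen_ne_fun ha.continuous continuous_const)
  have ht₀V : t₀ ∈ V := ⟨ht₀, ha0⟩
  set θ : ℝ → ℝ := fun s => Real.arctan (b s / a s) with hθdef
  have hθ : ContDiffAt ℝ (⊤ : ℕ∞) θ t₀ := by
    exact Real.contDiff_arctan.contDiffAt.comp t₀ (hb.contDiffAt.div ha.contDiffAt ha0)
  -- derivative of θ equals derivative of ϕ on V
  have hdiff : ∀ t ∈ V, HasDerivAt (fun s => ϕ s - θ s) 0 t := by
    intro t ht
    obtain ⟨htI, hta⟩ := ht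
    have hθt : HasDerivAt θ
        (1 / (1 + (b t / a t) ^ 2) * ((deriv b t * a t - b t * deriv a t) / a t ^ 2)) t :=
      ((hbD t).div (haD t) hta).arctan
    have hat : a t ≠ 0 := hta
    have hval : 1 / (1 + (b t / a t) ^ 2) * ((deriv b t * a t - b t * deriv a t) / a t ^ 2)
        = a t * deriv b t - b t * deriv a t := by
      have h1 := hab t htI
      field_simp
      linear_combination (-(a t * deriv b t - b t * deriv a t)) * h1
    rw [hval] at hθt
    have := (hϕder t).sub hθt; rw [sub_self] at this; exact this
  -- hence ϕ - θ is constant near t₀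
  obtain ⟨r, hr, hball⟩ := Metric.isOpen_iff.mp hVopen t₀ ht₀V
  have hev : ϕ =ᶠ[nhds t₀] fun s => (ϕ t₀ - θ t₀) + θ s := by
    filter_upwards [Metric.ball_mem_nhds t₀ hr] with s hs
    have hc : ϕ s - θ s = ϕ t₀ - θ t₀ := by
      exact const_of_hasDerivAt_zero (S := Metric.ball t₀ r)
        (convex_ball t₀ r).ordConnected hs (Metric.mem_ball_self hr)
        (fun t ht => hdiff t (hball ht))
    linarith
  exact (contDiffAt_const.add hθ).congr_of_eventuallyEq hev

/-- every unit-speed Legendre curve in `𝒬³_α` admits a smooth angle function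
`ϕ` with `υ₁' = cos ϕ/υ₁`, `υ₂' = sin ϕ/υ₁`, `υ₃' = 2 sin ϕ`; moreover `(υ₁²)' = 2 cos ϕ`,
so `υ₁(s)² = υ₁(s₀)² + 2∫_{s₀}^{s} cos ϕ(t) dt`. -/
theorem legendre_curve_angle_representation_Q (ε : ℝ) (hε : ε = 1 ∨ ε = -1)
    (I : Set ℝ) (hIopen : IsOpen I) (hIconn : I.OrdConnected)
    (υ : ℝ → R3) (hυ : ContDiff ℝ (⊤ : ℕ∞) υ)
    (hpos : ∀ s ∈ I, 0 < (υ s).1)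
    (hLeg : ∀ s ∈ I, etaQ (υ s) (deriv υ s) = 0)
    (hUnit : ∀ s ∈ I, gQ ε (υ s) (deriv υ s) (deriv υ s) = 1) :
    ∃ ϕ : ℝ → ℝ, ContDiffOn ℝ (⊤ : ℕ∞) ϕ I ∧
      ∀ s ∈ I,
        (deriv υ s).1 = Real.cos (ϕ s) / (υ s).1 ∧
        (deriv υ s).2.1 = Real.sin (ϕ s) / (υ s).1 ∧
        (deriv υ s).2.2 = 2 * Real.sin (ϕ s) ∧
        deriv (fun t => (υ t).1 ^ 2) s = 2 * Real.cos (ϕ s) ∧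
        ∀ s₀ ∈ I, (υ s).1 ^ 2 = (υ s₀).1 ^ 2 + 2 * ∫ t in s₀..s, Real.cos (ϕ t) := by
  rcases Set.eq_empty_or_nonempty I with hI | ⟨s₀, hs₀⟩
  · exact ⟨fun _ => 0, by rw [hI]; intro x hx; exact absurd hx (Set.notMem_empty x),
      by simp [hI]⟩
  -- the derivative of υ is smooth
  have hd : ContDiff ℝ (⊤ : ℕ∞) (deriv υ) := by
    exact (contDiff_infty_iff_deriv.mp hυ).2
  set a : ℝ → ℝ := fun t => (υ t).1 * (deriv υ t).1 with hadef
  set b : ℝ → ℝ := fun t => (υ t).1 * (deriv υ t).2.1 with hbdef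
  have ha : ContDiff ℝ (⊤ : ℕ∞) a := hυ.fst.mul hd.fst
  have hb : ContDiff ℝ (⊤ : ℕ∞) b := hυ.fst.mul hd.snd.fst
  have haD : ∀ t, HasDerivAt a (deriv a t) t :=
    fun t => (ha.differentiable (by simp) t).hasDerivAt
  have hbD : ∀ t, HasDerivAt b (deriv b t) t :=
    fun t => (hb.differentiable (by simp) t).hasDerivAt
  -- the circle relation
  have hab : ∀ s ∈ I, a s ^ 2 + b s ^ 2 = 1 := by
    intro s hs
    have h := hUnit s hs
    simp only [gQ, hLeg s hs] at h
    simp only [hadef, hbdef]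
    ring_nf
    ring_nf at h
    linarith
  -- tangency relation: a a' + b b' = 0 on I
  have key : ∀ s ∈ I, a s * deriv a s + b s * deriv b s = 0 := by
    intro s hs
    have h1 : HasDerivAt (fun t => a t ^ 2 + b t ^ 2)
        (2 * a s ^ 1 * deriv a s + 2 * b s ^ 1 * deriv b s) s := by
      exact ((haD s).pow 2).add ((hbD s).pow 2)
    have h2 : HasDerivAt (fun t => a t ^ 2 + b t ^ 2) 0 s := by
      refine (hasDerivAt_const s (1 : ℝ)).congr_of_eventuallyEq ?_
      filter_upwards [hIopen.mem_nhds hs] with t ht using hab t ht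
    have := h1.unique h2
    simp only [pow_one] at this
    linarith
  -- the angle integrand
  set w : ℝ → ℝ := fun t => a t * deriv b t - b t * deriv a t with hwdef
  have hwc : Continuous w :=
    ((ha.continuous.mul (hb.continuous_deriv (by simp))).sub
      (hb.continuous.mul (ha.continuous_deriv (by simp))))
  obtain ⟨θ₀, hc0, hs0⟩ := exists_angle (hab s₀ hs₀)
  set ϕ : ℝ → ℝ := fun s => θ₀ + ∫ t in s₀..s, w t with hϕdef
  have hϕder : ∀ s, HasDerivAt ϕ (w s) s := by
    intro s
    exact (intervalIntegral.integral_hasDerivAt_right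
      (hwc.intervalIntegrable _ _)
      (hwc.stronglyMeasurableAtFilter _ _) hwc.continuousAt).const_add θ₀
  have hϕcont : Continuous ϕ :=
    continuous_iff_continuousAt.mpr fun s => (hϕder s).continuousAt
  -- the function a cos ϕ + b sin ϕ is constant, equal to 1, on I
  have hg : ∀ s ∈ I, a s * Real.cos (ϕ s) + b s * Real.sin (ϕ s) = 1 := by
    intro s hs
    have hGd : ∀ t ∈ I, HasDerivAt (fun u => a u * Real.cos (ϕ u) + b u * Real.sin (ϕ u)) 0 t := by
      intro t ht
      have h1 : HasDerivAt (fun u => a u * Real.cos (ϕ u) + b u * Real.sin (ϕ u))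
          ((deriv a t * Real.cos (ϕ t) + a t * (-Real.sin (ϕ t) * w t)) +
           (deriv b t * Real.sin (ϕ t) + b t * (Real.cos (ϕ t) * w t))) t :=
        ((haD t).mul (hϕder t).cos).add ((hbD t).mul (hϕder t).sin)
      convert h1 using 1
      have h2 := key t ht
      have h3 := hab t ht
      simp only [hwdef]
      linear_combination (-(Real.cos (ϕ t) * a t) - Real.sin (ϕ t) * b t) * h2 +
        (Real.cos (ϕ t) * deriv a t + Real.sin (ϕ t) * deriv b t) * h3
    have hcst := const_of_hasDerivAt_zero hIconn hs hs₀ hGd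
    have hϕs₀ : ϕ s₀ = θ₀ := by simp [hϕdef]
    rw [hcst, hϕs₀, hc0, hs0]
    linarith [hab s₀ hs₀]
  -- pointwise identification of cos ϕ and sin ϕ
  have hcos : ∀ s ∈ I, Real.cos (ϕ s) = a s ∧ Real.sin (ϕ s) = b s := by
    intro s hs
    have h1 := hg s hs
    have h2 := hab s hs
    have h3 := Real.sin_sq_add_cos_sq (ϕ s)
    constructor
    · nlinarith [sq_nonneg (a s - Real.cos (ϕ s)), sq_nonneg (b s - Real.sin (ϕ s))]
    · nlinarith [sq_nonneg (a s - Real.cos (ϕ s)), sq_nonneg (b s - Real.sin (ϕ s))]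
  refine ⟨ϕ, ?_, ?_⟩
  · -- smoothness (analyticity) of ϕ on I
    intro t₀ ht₀
    have h0 : a t₀ ≠ 0 ∨ b t₀ ≠ 0 := by
      by_contra h
      push_neg at h
      have := hab t₀ ht₀
      rw [h.1, h.2] at this; norm_num at this
    rcases h0 with h0 | h0
    · exact (local_analytic hIopen a b ϕ ha hb hϕder hab ht₀ h0).contDiffWithinAt
    · refine (local_analytic hIopen b (fun t => -a t) ϕ hb ha.neg ?_ ?_ ht₀ h0).contDiffWithinAt
      · intro s
        have hda : deriv (fun t => -a t) s = -deriv a s := by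
          simpa using deriv.neg (f := a) (x := s)
        rw [hda]
        convert hϕder s using 1
        ring
      · intro s hs
        have h := hab s hs
        linear_combination h
  · intro s hs
    obtain ⟨hc, hsn⟩ := hcos s hs
    have hx : (υ s).1 ≠ 0 := (hpos s hs).ne'
    have hυ1D : ∀ t, HasDerivAt (fun u => (υ u).1) (deriv υ t).1 t :=
      fun t => hasDerivAt_fst3 (hυ.differentiable (by simp) t).hasDerivAt
    refine ⟨?_, ?_, ?_, ?_, ?_⟩
    · rw [hc]
      show (deriv υ s).1 = (υ s).1 * (deriv υ s).1 / (υ s).1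
      rw [mul_div_cancel_left₀ _ hx]
    · rw [hsn]
      show (deriv υ s).2.1 = (υ s).1 * (deriv υ s).2.1 / (υ s).1
      rw [mul_div_cancel_left₀ _ hx]
    · have h := hLeg s hs
      simp only [etaQ] at h
      rw [hsn]
      show (deriv υ s).2.2 = 2 * ((υ s).1 * (deriv υ s).2.1)
      linarith
    · have h := (show HasDerivAt (fun u => (υ u).1 ^ 2) _ s from (hυ1D s).pow 2).deriv
      rw [h, hc]
      show (2 : ℕ) * (υ s).1 ^ (2 - 1) * (deriv υ s).1 = 2 * ((υ s).1 * (deriv υ s).1)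
      push_cast
      ring
    · intro s₁ hs₁
      have hFD : ∀ t ∈ Set.uIcc s₁ s, HasDerivAt (fun u => (υ u).1 ^ 2)
          (2 * Real.cos (ϕ t)) t := by
        intro t ht
        have htI : t ∈ I := hIconn.uIcc_subset hs₁ hs ht
        have h1 : HasDerivAt (fun u => (υ u).1 ^ 2) _ t := (hυ1D t).pow 2
        convert h1 using 1
        rw [(hcos t htI).1]
        show 2 * ((υ t).1 * (deriv υ t).1) = (2 : ℕ) * (υ t).1 ^ (2 - 1) * (deriv υ t).1
        push_cast
        ring
      have hInt : IntervalIntegrable (fun t => 2 * Real.cos (ϕ t))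
          MeasureTheory.volume s₁ s :=
        (continuous_const.mul (Real.continuous_cos.comp hϕcont)).intervalIntegrable _ _
      have h := intervalIntegral.integral_eq_sub_of_hasDerivAt hFD hInt
      rw [intervalIntegral.integral_const_mul] at h
      linarith
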